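/- Let F : C₁ → C₂ be a tensor functor between rigid tensor Q-linear pseudo-abelian categories that induces an injection End(1_{C₁}) → End(1_{C₂}) on endomorphism rings of the unit objects. If X is a finite-dimensional object of C₁ (in the sense of Kimura) with F(X) = 0, then X = 0. -/

import Mathlib

open CategoryTheory CategoryTheory.Limits MonoidalCategory

universe v v₂ u u₂

namespace Kimura

section

variable {C : Type u} [Category.{v} C]

section Monoidal
variable [MonoidalCategory C] [BraidedCategory C]

/-- The iterated tensor power `X^{⊗ n}`. -/
def tpow (X : C) : ℕ → C
  | 0 => 𝟙_ C
  | n + 1 => X ⊗ tpow X n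

/-- The braiding of the `i`-th and `(i+1)`-st tensor factors of `X^{⊗ n}`. -/
def braidAt (X : C) : (n i : ℕ) → CategoryTheory.End (tpow X n)
  | n + 2, 0 =>
      (α_ X X (tpow X n)).inv ≫ ((β_ X X).hom ▷ tpow X n) ≫ (α_ X X (tpow X n)).hom
  | n + 1, i + 1 => X ◁ braidAt X n i
  | 0, _ => 𝟙 _
  | 1, _ => 𝟙 _

end Monoidal

section LinearMonoidal
variable [Preadditive C] [Linear ℚ C] [MonoidalCategory C] [BraidedCategory C]

/-- `α` is the canonical action of the symmetric group on `X^{⊗ n}`: it is a monoid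
homomorphism sending each adjacent transposition to the corresponding braiding. -/
def IsPermAction (X : C) (n : ℕ)
    (α : Equiv.Perm (Fin n) →* CategoryTheory.End (tpow X n)) : Prop :=
  ∀ (i : ℕ) (h : i + 1 < n),
    α (Equiv.swap ⟨i, Nat.lt_of_succ_lt h⟩ ⟨i + 1, h⟩) = braidAt X n i

/-- The symmetrizer idempotent `(1/n!) ∑_σ σ` on `X^{⊗ n}`. -/
noncomputable def symmetrizer (X : C) (n : ℕ)
    (α : Equiv.Perm (Fin n) →* CategoryTheory.End (tpow X n)) :
    CategoryTheory.End (tpow X n) :=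
  (n.factorial : ℚ)⁻¹ • ∑ σ : Equiv.Perm (Fin n), α σ

/-- The antisymmetrizer idempotent `(1/n!) ∑_σ sgn(σ) σ` on `X^{⊗ n}`. -/
noncomputable def antisymmetrizer (X : C) (n : ℕ)
    (α : Equiv.Perm (Fin n) →* CategoryTheory.End (tpow X n)) :
    CategoryTheory.End (tpow X n) :=
  (n.factorial : ℚ)⁻¹ •
    ∑ σ : Equiv.Perm (Fin n), (((Equiv.Perm.sign σ : ℤ)) : ℚ) • α σ

/-- `∧ⁿ X = 0`: the image of the antisymmetrizer idempotent on `X^{⊗ n}` vanishes,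
i.e. the antisymmetrizer itself is the zero endomorphism. -/
def WedgeIsZero (X : C) (n : ℕ) : Prop :=
  ∃ α, IsPermAction X n α ∧ antisymmetrizer X n α = 0

/-- `Symⁿ X = 0`: the image of the symmetrizer idempotent on `X^{⊗ n}` vanishes. -/
def SymIsZero (X : C) (n : ℕ) : Prop :=
  ∃ α, IsPermAction X n α ∧ symmetrizer X n α = 0

end LinearMonoidal

section Additive
variable [Preadditive C]

/-- `X` decomposes as a direct sum `Y ⊕ Z`. -/
def IsDirectSumOf (X Y Z : C) : Prop :=
  ∃ (p : X ⟶ Y) (q : X ⟶ Z) (i : Y ⟶ X) (j : Z ⟶ X),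
    i ≫ p = 𝟙 Y ∧ j ≫ q = 𝟙 Z ∧ i ≫ q = 0 ∧ j ≫ p = 0 ∧ p ≫ i + q ≫ j = 𝟙 X

end Additive

section KF
variable [Preadditive C] [Linear ℚ C] [MonoidalCategory C] [BraidedCategory C]

/-- Kimura finite-dimensionality: `X = Y ⊕ Z` with `∧^m Y = 0` and `Sym^n Z = 0`. -/
def KimuraFinite (X : C) : Prop :=
  ∃ (Y Z : C) (m n : ℕ), IsDirectSumOf X Y Z ∧ WedgeIsZero Y m ∧ SymIsZero Z n

end KF

section Trace
variable [MonoidalCategory C] [BraidedCategory C] [RightRigidCategory C]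

/-- The categorical trace of an endomorphism, defined via the rigid structure. -/
noncomputable def catTrace {X : C} (f : X ⟶ X) : CategoryTheory.End (𝟙_ C) :=
  η_ X Xᘁ ≫ (f ▷ Xᘁ) ≫ (β_ X Xᘁ).hom ≫ ε_ X Xᘁ

end Trace

end

end Kimura

namespace KimuraAux

open CategoryTheory CategoryTheory.Limits MonoidalCategory BraidedCategory
open Equiv Equiv.Perm
open Kimura

/-! ### Permutation lemmas -/

/-- embedding of `Perm (Fin k)` into `Perm (Fin (k+1))` fixing `0`. -/
def emb1 {k : ℕ} (e : Perm (Fin k)) : Perm (Fin (k + 1)) :=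
  Equiv.Perm.decomposeFin.symm (0, e)

@[simp] lemma emb1_apply_zero {k : ℕ} (e : Perm (Fin k)) : emb1 e 0 = 0 := by
  simp [emb1]

@[simp] lemma emb1_apply_succ {k : ℕ} (e : Perm (Fin k)) (x : Fin k) :
    emb1 e x.succ = (e x).succ := by
  simp [emb1, Equiv.Perm.decomposeFin_symm_apply_succ]

lemma emb1_mul {k : ℕ} (a b : Perm (Fin k)) : emb1 (a * b) = emb1 a * emb1 b := by
  ext x
  refine Fin.cases ?_ ?_ x <;> simp [Equiv.Perm.mul_apply]

lemma emb1_one {k : ℕ} : emb1 (1 : Perm (Fin k)) = 1 := by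
  ext x
  refine Fin.cases ?_ ?_ x <;> simp

lemma emb1_swap {k : ℕ} (a b : Fin k) : emb1 (swap a b) = swap a.succ b.succ := by
  ext x
  refine Fin.cases ?_ ?_ x
  · simp [swap_apply_of_ne_of_ne (Fin.succ_ne_zero a).symm (Fin.succ_ne_zero b).symm]
  · intro i
    simp only [emb1_apply_succ, swap_apply_def, Fin.succ_inj]
    split_ifs <;> rfl

lemma decomposeFin_symm_eq {k : ℕ} (p : Fin (k + 1)) (e : Perm (Fin k)) :
    Equiv.Perm.decomposeFin.symm (p, e) = swap 0 p * emb1 e := by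
  ext x
  refine Fin.cases ?_ ?_ x
  · simp [Equiv.Perm.mul_apply]
  · intro i
    simp [Equiv.Perm.mul_apply, Equiv.Perm.decomposeFin_symm_apply_succ]

lemma swap_zero_eq {k : ℕ} (q : Fin (k + 1)) :
    swap (0 : Fin (k + 2)) q.succ =
      swap 1 q.succ * swap 0 1 * swap 1 q.succ := by
  have h := Equiv.swap_apply_apply (swap (1 : Fin (k+2)) q.succ) 0 1
  have h0 : swap (1 : Fin (k+2)) q.succ 0 = 0 :=
    swap_apply_of_ne_of_ne (by simp [Fin.ext_iff]) ((Fin.succ_ne_zero q).symm)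
  have h1 : swap (1 : Fin (k+2)) q.succ 1 = q.succ := swap_apply_left _ _
  rw [h0, h1, swap_inv] at h
  exact h

lemma emb1_swap_zero {k : ℕ} (q : Fin (k + 1)) :
    emb1 (swap 0 q) = swap 1 q.succ := by
  rw [emb1_swap]; rfl

/-! ### Partial trace over the first tensor factor -/

variable {C : Type u} [Category.{v} C] [MonoidalCategory C]

section Ptr

variable [BraidedCategory C] [RightRigidCategory C]

/-- Partial trace over the first tensor factor. -/
noncomputable def ptr1 (W : C) {M : C} (f : W ⊗ M ⟶ W ⊗ M) : M ⟶ M :=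
  (λ_ M).inv ≫ (η_ W Wᘁ ▷ M) ≫ ((β_ W Wᘁ).hom ▷ M) ≫ (α_ Wᘁ W M).hom ≫ (Wᘁ ◁ f) ≫
    (α_ Wᘁ W M).inv ≫ (ε_ W Wᘁ ▷ M) ≫ (λ_ M).hom

variable (W : C) {M : C}

lemma ptr1_comp_whiskerLeft (f : W ⊗ M ⟶ W ⊗ M) (u : M ⟶ M) :
    ptr1 W (f ≫ W ◁ u) = ptr1 W f ≫ u := by
  simp only [ptr1, MonoidalCategory.whiskerLeft_comp, Category.assoc]
  rw [associator_inv_naturality_right_assoc, whisker_exchange_assoc]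
  simp

lemma ptr1_whiskerLeft_comp (u : M ⟶ M) (f : W ⊗ M ⟶ W ⊗ M) :
    ptr1 W ((W ◁ u) ≫ f) = u ≫ ptr1 W f := by
  simp only [ptr1, MonoidalCategory.whiskerLeft_comp, Category.assoc]
  rw [← associator_naturality_right_assoc, ← whisker_exchange_assoc,
    ← whisker_exchange_assoc, ← leftUnitor_inv_naturality_assoc]

lemma ptr1_id :
    ptr1 W (𝟙 (W ⊗ M)) = (λ_ M).inv ≫ (catTrace (𝟙 W) ▷ M) ≫ (λ_ M).hom := by
  simp [ptr1, catTrace]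

lemma ptr1_braid (M : C) :
    ptr1 W ((α_ W W M).inv ≫ ((β_ W W).hom ▷ M) ≫ (α_ W W M).hom) = 𝟙 (W ⊗ M) := by
  have h1 : (β_ W (Wᘁ ⊗ W)).hom =
      (α_ W Wᘁ W).inv ≫ ((β_ W Wᘁ).hom ▷ W) ≫ (α_ Wᘁ W W).hom ≫
        (Wᘁ ◁ (β_ W W).hom) ≫ (α_ Wᘁ W W).inv := braiding_tensor_right_hom W Wᘁ W
  have h2 : ((β_ W Wᘁ).hom ▷ W) ≫ (α_ Wᘁ W W).hom ≫ (Wᘁ ◁ (β_ W W).hom) =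
      (α_ W Wᘁ W).hom ≫ (β_ W (Wᘁ ⊗ W)).hom ≫ (α_ Wᘁ W W).hom := by
    rw [h1]; simp
  have h3 : (β_ W (Wᘁ ⊗ W)).hom ≫ (ε_ W Wᘁ ▷ W) = (W ◁ ε_ W Wᘁ) ≫ (β_ W (𝟙_ C)).hom :=
    (braiding_naturality_right W (ε_ W Wᘁ)).symm
  have h4 : (β_ W (𝟙_ C)).hom = (ρ_ W).hom ≫ (λ_ W).inv := by
    rw [← braiding_leftUnitor W]; simp
  calc ptr1 W ((α_ W W M).inv ≫ ((β_ W W).hom ▷ M) ≫ (α_ W W M).hom)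
      = 𝟙 (W ⊗ M) ⊗≫ ((η_ W Wᘁ ▷ W) ▷ M) ⊗≫
          ((((β_ W Wᘁ).hom ▷ W) ≫ (α_ Wᘁ W W).hom ≫ (Wᘁ ◁ (β_ W W).hom)) ▷ M) ⊗≫
          (ε_ W Wᘁ ▷ (W ⊗ M)) ⊗≫ 𝟙 (W ⊗ M) := by
        rw [ptr1]; monoidal
    _ = 𝟙 (W ⊗ M) ⊗≫ ((η_ W Wᘁ ▷ W) ▷ M) ⊗≫
          (((α_ W Wᘁ W).hom ≫ (β_ W (Wᘁ ⊗ W)).hom ≫ (α_ Wᘁ W W).hom) ▷ M) ⊗≫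
          (ε_ W Wᘁ ▷ (W ⊗ M)) ⊗≫ 𝟙 (W ⊗ M) := by rw [h2]
    _ = 𝟙 (W ⊗ M) ⊗≫ ((η_ W Wᘁ ▷ W) ▷ M) ⊗≫ ((α_ W Wᘁ W).hom ▷ M) ⊗≫
          (((β_ W (Wᘁ ⊗ W)).hom ≫ (ε_ W Wᘁ ▷ W)) ▷ M) ⊗≫ 𝟙 (W ⊗ M) := by monoidal
    _ = 𝟙 (W ⊗ M) ⊗≫ ((η_ W Wᘁ ▷ W) ▷ M) ⊗≫ ((α_ W Wᘁ W).hom ▷ M) ⊗≫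
          (((W ◁ ε_ W Wᘁ) ≫ (β_ W (𝟙_ C)).hom) ▷ M) ⊗≫ 𝟙 (W ⊗ M) := by rw [h3]
    _ = 𝟙 (W ⊗ M) ⊗≫
          (((η_ W Wᘁ ▷ W) ≫ (α_ W Wᘁ W).hom ≫ (W ◁ ε_ W Wᘁ)) ▷ M) ⊗≫
          ((β_ W (𝟙_ C)).hom ▷ M) ⊗≫ 𝟙 (W ⊗ M) := by monoidal
    _ = 𝟙 (W ⊗ M) ⊗≫ (((λ_ W).hom ≫ (ρ_ W).inv) ▷ M) ⊗≫
          ((β_ W (𝟙_ C)).hom ▷ M) ⊗≫ 𝟙 (W ⊗ M) := by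
        rw [ExactPairing.evaluation_coevaluation]
    _ = 𝟙 (W ⊗ M) := by rw [h4]; monoidal

lemma ptr1_braid_comp (M : C) (c : W ⊗ M ⟶ W ⊗ M) :
    ptr1 W ((α_ W W M).inv ≫ ((β_ W W).hom ▷ M) ≫ (α_ W W M).hom ≫ (W ◁ c)) = c := by
  have h : (α_ W W M).inv ≫ ((β_ W W).hom ▷ M) ≫ (α_ W W M).hom ≫ (W ◁ c) =
      ((α_ W W M).inv ≫ ((β_ W W).hom ▷ M) ≫ (α_ W W M).hom) ≫ (W ◁ c) := by
    simp [Category.assoc]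
  rw [h, ptr1_comp_whiskerLeft, ptr1_braid, Category.id_comp]

lemma whiskerLeft_cancel (M : C) {c c' : W ⊗ M ⟶ W ⊗ M} (h : W ◁ c = W ◁ c') : c = c' := by
  have h1 := ptr1_braid_comp W M c
  have h2 := ptr1_braid_comp W M c'
  rw [h] at h1
  exact h1.symm.trans h2

end Ptr

section PtrAdd

variable [BraidedCategory C] [RightRigidCategory C] [Preadditive C] [MonoidalPreadditive C]
variable (W : C) {M : C}

lemma ptr1_zero : ptr1 W (0 : W ⊗ M ⟶ W ⊗ M) = 0 := by
  simp [ptr1]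

lemma ptr1_sum {ι : Type*} (s : Finset ι) (f : ι → (W ⊗ M ⟶ W ⊗ M)) :
    ptr1 W (∑ i ∈ s, f i) = ∑ i ∈ s, ptr1 W (f i) := by
  simp [ptr1, whiskerLeft_sum, Preadditive.sum_comp, Preadditive.comp_sum]

lemma ptr1_whisker_zero (hd : catTrace (𝟙 W) = 0) (u : M ⟶ M) :
    ptr1 W (W ◁ u) = 0 := by
  have h := ptr1_comp_whiskerLeft W (𝟙 (W ⊗ M)) u
  rw [Category.id_comp] at h
  rw [h, ptr1_id, hd]
  simp

lemma ptr1_smul [Linear ℚ C] [MonoidalLinear ℚ C] (a : ℚ) (f : W ⊗ M ⟶ W ⊗ M) :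
    ptr1 W (a • f) = a • ptr1 W f := by
  simp [ptr1, Linear.comp_smul, Linear.smul_comp]

end PtrAdd

/-! ### The engine -/

/-- signed coefficient -/
def sgn (b : Bool) {m : ℕ} (σ : Perm (Fin m)) : ℚ :=
  if b then ((Equiv.Perm.sign σ : ℤ) : ℚ) else 1

section Engine

variable [Preadditive C] [Linear ℚ C] [SymmetricCategory C] [MonoidalPreadditive C]
  [MonoidalLinear ℚ C] [RightRigidCategory C]

theorem engine (W : C) (hd : catTrace (𝟙 W) = 0) (b : Bool) :
    ∀ (n : ℕ) (α : Perm (Fin n) →* CategoryTheory.End (tpow W n)),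
      IsPermAction W n α →
      (∑ σ : Perm (Fin n), sgn b σ • (α σ : CategoryTheory.End (tpow W n)) = 0) →
      𝟙 W = 0 := by
  intro n
  induction n with
  | zero =>
    intro α hα hsum
    have h1 : (𝟙 (𝟙_ C) : 𝟙_ C ⟶ 𝟙_ C) = 0 := by
      have he : ∑ σ : Perm (Fin 0), sgn b σ • (α σ : CategoryTheory.End (tpow W 0)) =
          𝟙 (tpow W 0) := by
        rw [Fintype.sum_subsingleton _ 1]
        simp [sgn]
      exact he ▸ hsum
    calc 𝟙 W = (ρ_ W).inv ≫ (W ◁ 𝟙 (𝟙_ C)) ≫ (ρ_ W).hom := by simp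
      _ = 0 := by rw [h1]; simp
  | succ k ih =>
    intro α hα hsum
    rcases k with _ | k'
    · -- n = 1
      have h1 : (𝟙 (W ⊗ 𝟙_ C) : W ⊗ 𝟙_ C ⟶ W ⊗ 𝟙_ C) = 0 := by
        have he : ∑ σ : Perm (Fin 1), sgn b σ • (α σ : CategoryTheory.End (tpow W 1)) =
            𝟙 (tpow W 1) := by
          rw [Fintype.sum_subsingleton _ 1]
          simp [sgn]
        exact he ▸ hsum
      calc 𝟙 W = (ρ_ W).inv ≫ 𝟙 (W ⊗ 𝟙_ C) ≫ (ρ_ W).hom := by simp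
        _ = 0 := by rw [h1]; simp
    · -- n = k' + 2
      -- peeling
      have PE : ∀ e : Perm (Fin (k'+1)), ∃ u : CategoryTheory.End (tpow W (k'+1)),
          α (emb1 e) = W ◁ u := by
        intro e
        have he : e ∈ Submonoid.closure
            (Set.range fun i : Fin k' => Equiv.swap i.castSucc i.succ) := by
          rw [Equiv.Perm.mclosure_swap_castSucc_succ]; trivial
        refine Submonoid.closure_induction ?_ ?_ ?_ he
        · rintro x ⟨i, rfl⟩
          refine ⟨braidAt W (k'+1) (i : ℕ), ?_⟩
          have hsw : emb1 (Equiv.swap i.castSucc i.succ) =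
              Equiv.swap (⟨(i:ℕ)+1, by omega⟩ : Fin (k'+2)) ⟨(i:ℕ)+1+1, by omega⟩ := by
            rw [emb1_swap]
            congr 1 <;> exact Fin.ext (by simp)
          rw [hsw, hα ((i:ℕ)+1) (by omega)]
          rfl
        · exact ⟨𝟙 _, by rw [emb1_one, map_one]; simp; rfl⟩
        · rintro x y hx hy ⟨vx, hvx⟩ ⟨vy, hvy⟩
          refine ⟨vy ≫ vx, ?_⟩
          rw [emb1_mul, map_mul, End.mul_def, hvx, hvy]
          exact (MonoidalCategory.whiskerLeft_comp W vy vx).symm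
      choose v hv using PE
      have cancel : ∀ {c c' : CategoryTheory.End (tpow W (k'+1))},
          (W ◁ c : W ⊗ tpow W (k'+1) ⟶ W ⊗ tpow W (k'+1)) = W ◁ c' → c = c' := by
        intro c c' h
        exact whiskerLeft_cancel W (tpow W k') h
      have v_mul : ∀ a c, v (a * c) = v a * v c := by
        intro a c
        apply cancel
        calc W ◁ v (a * c) = show (W ⊗ tpow W (k'+1) ⟶ W ⊗ tpow W (k'+1)) from α (emb1 (a * c)) := (hv _).symm
          _ = (α (emb1 c) ≫ α (emb1 a) : W ⊗ tpow W (k'+1) ⟶ W ⊗ tpow W (k'+1)) := by rw [emb1_mul, map_mul]; rfl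
          _ = (W ◁ v c) ≫ (W ◁ v a) := by rw [hv, hv]; rfl
          _ = W ◁ (v c ≫ v a) := by rw [← MonoidalCategory.whiskerLeft_comp]
          _ = W ◁ (v a * v c) := rfl
      have v_one : v 1 = 𝟙 (tpow W (k'+1)) := by
        apply cancel
        calc W ◁ v 1 = show (W ⊗ tpow W (k'+1) ⟶ W ⊗ tpow W (k'+1)) from α (emb1 1) := (hv _).symm
          _ = 𝟙 (W ⊗ tpow W (k'+1)) := by rw [emb1_one, map_one]; rfl
          _ = W ◁ 𝟙 (tpow W (k'+1)) := by simp
      let βh : Perm (Fin (k'+1)) →* CategoryTheory.End (tpow W (k'+1)) :=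
        { toFun := v, map_one' := v_one, map_mul' := v_mul }
      have hβ : IsPermAction W (k'+1) βh := by
        intro i h
        apply cancel
        calc (show CategoryTheory.End (tpow W (k'+2)) from
              W ◁ βh (Equiv.swap ⟨i, Nat.lt_of_succ_lt h⟩ ⟨i+1, h⟩))
            = α (emb1 (Equiv.swap ⟨i, Nat.lt_of_succ_lt h⟩ ⟨i+1, h⟩)) := (hv _).symm
          _ = α (Equiv.swap (⟨i+1, by omega⟩ : Fin (k'+2)) ⟨i+1+1, by omega⟩) := by
              rw [emb1_swap]
              congr 1 <;> exact Fin.ext (by simp)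
          _ = braidAt W (k'+2) (i+1) := hα (i+1) (by omega)
          _ = (show CategoryTheory.End (tpow W (k'+2)) from W ◁ braidAt W (k'+1) i) := rfl
      have rr : ∀ q : Fin (k'+1), v (swap 0 q) ≫ v (swap 0 q) = 𝟙 (tpow W (k'+1)) := by
        intro q
        have h := v_mul (swap 0 q) (swap 0 q)
        rw [Equiv.swap_mul_self, v_one] at h
        exact h.symm
      have hα0 : α (swap (0 : Fin (k'+2)) 1) = braidAt W (k'+2) 0 := by
        have h01 : swap (0 : Fin (k'+2)) 1 =
            Equiv.swap (⟨0, by omega⟩ : Fin (k'+2)) ⟨0+1, by omega⟩ := by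
          congr 1 <;> exact Fin.ext (by simp)
        rw [h01]
        exact hα 0 (by omega)
      -- the key pointwise computation
      have key : ∀ (p : Fin (k'+2)) (e : Perm (Fin (k'+1))),
          ptr1 W (M := tpow W (k'+1)) (α (Equiv.Perm.decomposeFin.symm (p, e))) =
            (if p = 0 then 0 else v e) := by
        intro p e
        refine Fin.cases ?_ ?_ p
        · rw [if_pos rfl]
          have hde : Equiv.Perm.decomposeFin.symm ((0 : Fin (k'+2)), e) = emb1 e := by
            rw [decomposeFin_symm_eq]
            ext x
            simp [Equiv.Perm.mul_apply, Equiv.swap_self]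
          rw [hde, hv]
          exact ptr1_whisker_zero W hd _
        · intro q
          rw [if_neg (Fin.succ_ne_zero q)]
          have hm : α (Equiv.Perm.decomposeFin.symm (q.succ, e)) =
              (W ◁ v e) ≫ (W ◁ v (swap 0 q)) ≫ braidAt W (k'+2) 0 ≫ (W ◁ v (swap 0 q)) := by
            have e1 : Equiv.Perm.decomposeFin.symm (q.succ, e) =
                emb1 (swap 0 q) * (swap 0 1 * (emb1 (swap 0 q) * emb1 e)) := by
              rw [decomposeFin_symm_eq, swap_zero_eq q, ← emb1_swap_zero q]
              group
            rw [e1, map_mul, map_mul, map_mul, hα0]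
            simp only [End.mul_def, Category.assoc]
            rw [hv, hv]
            rfl
          rw [hm]
          rw [ptr1_whiskerLeft_comp, ptr1_whiskerLeft_comp]
          have hb : ptr1 W (M := tpow W (k'+1))
              (braidAt W (k'+2) 0 ≫ (W ◁ v (swap 0 q))) = v (swap 0 q) := by
            have hbr : braidAt W (k'+2) 0 ≫ (W ◁ v (swap 0 q)) =
                (α_ W W (tpow W k')).inv ≫ ((β_ W W).hom ▷ tpow W k') ≫
                  (α_ W W (tpow W k')).hom ≫ (W ◁ v (swap 0 q)) := by
              rw [show braidAt W (k'+2) 0 = (α_ W W (tpow W k')).inv ≫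
                  ((β_ W W).hom ▷ tpow W k') ≫ (α_ W W (tpow W k')).hom from rfl]
              exact (Category.assoc _ _ _).trans (whisker_eq _ (Category.assoc _ _ _))
            refine (congrArg (ptr1 W (M := tpow W (k'+1))) hbr).trans ?_
            exact ptr1_braid_comp W (tpow W k') _
          rw [hb, rr q, Category.comp_id]
      -- sum manipulation
      have h2 : ∑ σ : Perm (Fin (k'+2)), sgn b σ • ptr1 W (M := tpow W (k'+1)) (α σ) = 0 := by
        have h2' : ptr1 W (M := tpow W (k'+1))
            (∑ σ : Perm (Fin (k'+2)), sgn b σ • (α σ : CategoryTheory.End (tpow W (k'+2)))) =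
            ∑ σ : Perm (Fin (k'+2)), sgn b σ • ptr1 W (M := tpow W (k'+1)) (α σ) := by
          refine (ptr1_sum W (M := tpow W (k'+1)) Finset.univ _).trans ?_
          exact Finset.sum_congr rfl fun σ _ => ptr1_smul W _ _
        replace h2' := ((congrArg (ptr1 W (M := tpow W (k'+1))) hsum).trans (ptr1_zero W)).symm.trans h2'
        exact h2'.symm
      have h3 : ∑ σ : Perm (Fin (k'+2)), sgn b σ • ptr1 W (M := tpow W (k'+1)) (α σ) =
          ∑ pe : Fin (k'+2) × Perm (Fin (k'+1)),
            sgn b (Equiv.Perm.decomposeFin.symm pe) •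
              ptr1 W (M := tpow W (k'+1)) (α (Equiv.Perm.decomposeFin.symm pe)) :=
        (Equiv.sum_comp Equiv.Perm.decomposeFin.symm _).symm
      have t1 : ∀ (q : Fin (k'+1)) (e : Perm (Fin (k'+1))),
          sgn b (Equiv.Perm.decomposeFin.symm (q.succ, e)) =
            (if b then (-1 : ℚ) else 1) * sgn b e := by
        intro q e
        cases b
        · simp [sgn]
        · simp [sgn, Equiv.Perm.decomposeFin.symm_sign, Fin.succ_ne_zero]
      have h4 : ∑ pe : Fin (k'+2) × Perm (Fin (k'+1)),
          sgn b (Equiv.Perm.decomposeFin.symm pe) •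
            ptr1 W (M := tpow W (k'+1)) (α (Equiv.Perm.decomposeFin.symm pe)) =
          (((k' : ℚ) + 1) * (if b then (-1 : ℚ) else 1)) •
            ∑ e : Perm (Fin (k'+1)), sgn b e • v e := by
        rw [Fintype.sum_prod_type, Fin.sum_univ_succ]
        have t0 : ∑ e : Perm (Fin (k'+1)),
            sgn b (Equiv.Perm.decomposeFin.symm ((0 : Fin (k'+2)), e)) •
              ptr1 W (M := tpow W (k'+1))
                (α (Equiv.Perm.decomposeFin.symm ((0 : Fin (k'+2)), e))) = 0 := by
          apply Finset.sum_eq_zero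
          intro e _
          rw [key 0 e, if_pos rfl, smul_zero]
        rw [t0, zero_add]
        have := fun (q : Fin (k'+1)) (e : Perm (Fin (k'+1))) => key q.succ e
        calc ∑ q : Fin (k'+1), ∑ e : Perm (Fin (k'+1)),
              sgn b (Equiv.Perm.decomposeFin.symm (q.succ, e)) •
                ptr1 W (M := tpow W (k'+1)) (α (Equiv.Perm.decomposeFin.symm (q.succ, e)))
            = ∑ _q : Fin (k'+1), ∑ e : Perm (Fin (k'+1)),
                ((if b then (-1 : ℚ) else 1) * sgn b e) • v e := by
              refine Finset.sum_congr rfl fun q _ => Finset.sum_congr rfl fun e _ => ?_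
              rw [key q.succ e, if_neg (Fin.succ_ne_zero q), t1]
          _ = (((k' : ℚ) + 1) * (if b then (-1 : ℚ) else 1)) •
              ∑ e : Perm (Fin (k'+1)), sgn b e • v e := by
              rw [Finset.sum_const, Finset.card_univ, Fintype.card_fin,
                ← Nat.cast_smul_eq_nsmul ℚ, Finset.smul_sum, Finset.smul_sum]
              refine Finset.sum_congr rfl fun e _ => ?_
              have hq : ((k' + 1 : ℕ) : ℚ) * ((if b = true then (-1:ℚ) else 1) * sgn b e) =
                  (((k' : ℚ) + 1) * if b = true then (-1:ℚ) else 1) * sgn b e := by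
                push_cast; ring
              rw [smul_smul, hq]
              exact (smul_smul _ _ _).symm
      have hne : (((k' : ℚ) + 1) * (if b then (-1 : ℚ) else 1)) ≠ 0 := by
        have hk : ((k' : ℚ) + 1) ≠ 0 := by positivity
        cases b <;>
          simp only [if_true, if_false, mul_neg, mul_one, neg_ne_zero, Bool.false_eq_true] <;>
          exact hk
      have h5 : ∑ e : Perm (Fin (k'+1)), sgn b e • (βh e : CategoryTheory.End (tpow W (k'+1))) = 0 := by
        have hz : (((k' : ℚ) + 1) * (if b then (-1 : ℚ) else 1)) •
            ∑ e : Perm (Fin (k'+1)), sgn b e • v e = 0 := by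
          rw [← h4, ← h3, h2]
        have h6 := congrArg
          (fun x => (((k' : ℚ) + 1) * (if b then (-1 : ℚ) else 1))⁻¹ • x) hz
        simp only [smul_smul, inv_mul_cancel₀ hne, one_smul, smul_zero] at h6
        exact h6
      exact ih βh hβ h5

theorem engine_wedge (W : C) (hd : catTrace (𝟙 W) = 0) {n : ℕ} (h : WedgeIsZero W n) :
    𝟙 W = 0 := by
  obtain ⟨α, hα, h0⟩ := h
  refine engine W hd true n α hα ?_
  have hfac : ((n.factorial : ℚ)) ≠ 0 := by
    exact_mod_cast Nat.factorial_ne_zero n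
  have : ∑ σ : Perm (Fin n), sgn true σ • (α σ : CategoryTheory.End (tpow W n)) =
      (n.factorial : ℚ) • antisymmetrizer W n α := by
    rw [antisymmetrizer, smul_smul, mul_inv_cancel₀ hfac, one_smul]
    exact Finset.sum_congr rfl fun σ _ => by simp [sgn]
  rw [this, h0, smul_zero]

theorem engine_sym (W : C) (hd : catTrace (𝟙 W) = 0) {n : ℕ} (h : SymIsZero W n) :
    𝟙 W = 0 := by
  obtain ⟨α, hα, h0⟩ := h
  refine engine W hd false n α hα ?_
  have hfac : ((n.factorial : ℚ)) ≠ 0 := by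
    exact_mod_cast Nat.factorial_ne_zero n
  have : ∑ σ : Perm (Fin n), sgn false σ • (α σ : CategoryTheory.End (tpow W n)) =
      (n.factorial : ℚ) • symmetrizer W n α := by
    rw [symmetrizer, smul_smul, mul_inv_cancel₀ hfac, one_smul]
    exact Finset.sum_congr rfl fun σ _ => by simp [sgn]
  rw [this, h0, smul_zero]

end Engine

end KimuraAux



open Kimura in
/-- A tensor functor injective on endomorphisms of the unit kills no nonzero
finite-dimensional object. -/
theorem kimura_zero_of_functor_zero
    {C₁ : Type u} [Category.{v} C₁] [Preadditive C₁] [Linear ℚ C₁]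
    [MonoidalCategory C₁] [SymmetricCategory C₁] [MonoidalPreadditive C₁]
    [MonoidalLinear ℚ C₁] [RightRigidCategory C₁] [IsIdempotentComplete C₁]
    {C₂ : Type u₂} [Category.{v₂} C₂] [Preadditive C₂] [Linear ℚ C₂]
    [MonoidalCategory C₂] [SymmetricCategory C₂] [MonoidalPreadditive C₂]
    [MonoidalLinear ℚ C₂] [RightRigidCategory C₂] [IsIdempotentComplete C₂]
    (F : C₁ ⥤ C₂) [F.Braided] [F.Additive] [F.Linear ℚ]
    (hinj : Function.Injective (fun f : CategoryTheory.End (𝟙_ C₁) =>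
      (Functor.LaxMonoidal.ε F ≫ F.map f ≫ inv (Functor.LaxMonoidal.ε F) :
        CategoryTheory.End (𝟙_ C₂))))
    (X : C₁) (hX : KimuraFinite X) (hFX : IsZero (F.obj X)) :
    IsZero X := by
  rw [IsZero.iff_id_eq_zero]
  obtain ⟨Y, Z, m, n, ⟨p, q, i, j, hip, hjq, hiq, hjp, hpq⟩, hW, hS⟩ := hX
  have hkill : ∀ (V : C₁) (iV : V ⟶ X) (pV : X ⟶ V), iV ≫ pV = 𝟙 V → IsZero (F.obj V) := by
    intro V iV pV hV
    rw [IsZero.iff_id_eq_zero]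
    have h1 : 𝟙 (F.obj V) = F.map iV ≫ F.map pV := by rw [← F.map_comp, hV, F.map_id]
    rw [h1, hFX.eq_of_tgt (F.map iV) 0, zero_comp]
  have htr : ∀ (V : C₁), IsZero (F.obj V) → catTrace (𝟙 V) = 0 := by
    intro V hV
    apply hinj
    have h1 : 𝟙 (F.obj V) = 0 := (IsZero.iff_id_eq_zero _).mp hV
    have hzz : IsZero (F.obj (V ⊗ Vᘁ)) := by
      rw [IsZero.iff_id_eq_zero]
      calc 𝟙 (F.obj (V ⊗ Vᘁ))
          = Functor.OplaxMonoidal.δ F V Vᘁ ≫ (𝟙 (F.obj V) ▷ F.obj Vᘁ) ≫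
            Functor.LaxMonoidal.μ F V Vᘁ := by
            rw [MonoidalCategory.id_whiskerRight, Category.id_comp, Functor.Monoidal.δ_μ]
        _ = 0 := by rw [h1]; simp
    have hη : F.map (η_ V Vᘁ) = 0 := hzz.eq_of_tgt _ 0
    dsimp only []
    rw [catTrace, F.map_comp, hη, zero_comp, F.map_zero]
  have hY0 : 𝟙 Y = 0 := KimuraAux.engine_wedge Y (htr Y (hkill Y i p hip)) hW
  have hZ0 : 𝟙 Z = 0 := KimuraAux.engine_sym Z (htr Z (hkill Z j q hjq)) hS
  calc 𝟙 X = p ≫ i + q ≫ j := hpq.symm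
    _ = p ≫ 𝟙 Y ≫ i + q ≫ 𝟙 Z ≫ j := by simp
    _ = 0 := by rw [hY0, hZ0]; simp
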